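/- arXiv:math/9810002 — 2 statements merged into one kernel-verified Lean document; each statement's English description precedes it below -/
import Mathlib

section
/- Let r be a natural number, and for each n with 0 ≤ n ≤ r choose a subset S_n ⊆ Fin r of cardinality n. Then the r+1 flag vectors f(S_0), f(S_1), …, f(S_r) are linearly independent in the free real vector space on words of length r in {a,b}. -/
/-!
Every shelling of a cell set `S` yields a word with exactly `#S` letters `b`, so flag vectors
of cell sets of different sizes are supported on disjoint sets of words. Evaluating at the word
`j ↦ (j ∈ S n)` of the identity shelling therefore separates `f(S n)` from all the others, while
`f(S n)` itself is positive there.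
-/

/-- The flag vector of the 1-graph on `Fin r` with cell set `S`: the sum over
all shellings (permutations `σ`) of the basis vector at the word
`j ↦ (σ j ∈ S)`. -/
noncomputable def flagVector {r : ℕ} (S : Finset (Fin r)) : (Fin r → Bool) →₀ ℝ :=
  ∑ σ : Equiv.Perm (Fin r), Finsupp.single (fun j => decide (σ j ∈ S)) (1 : ℝ)

open Finset

theorem Finsupp.linearIndependent_of_pairwise_apply_eq_zero {ι α K : Type*} [Field K]
    (v : ι → α →₀ K) (w : ι → α) (hoff : Pairwise fun i j ↦ v j (w i) = 0)
    (hdiag : ∀ i, v i (w i) ≠ 0) : LinearIndependent K v :=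
  .of_pairwise_dual_eq_zero_one v (fun i ↦ (v i (w i))⁻¹ • Finsupp.lapply (w i))
    (fun i j hij ↦ by simp [hoff hij]) (fun i ↦ by simp [hdiag i])

theorem Equiv.Perm.card_filter_apply_mem {α : Type*} [Fintype α] [DecidableEq α]
    (σ : Equiv.Perm α) (S : Finset α) : #{j | σ j ∈ S} = #S := by
  rw [← card_map σ.toEmbedding]
  congr 1
  ext x
  simp

theorem flagVector_apply {r : ℕ} (S : Finset (Fin r)) (w : Fin r → Bool) :
    flagVector S w = #{σ : Equiv.Perm (Fin r) | (fun j ↦ decide (σ j ∈ S)) = w} := by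
  simp [flagVector, Finsupp.finsetSum_apply, Finsupp.single_apply, Finset.sum_boole]

theorem flagVector_apply_eq_zero {r : ℕ} (S : Finset (Fin r)) (w : Fin r → Bool)
    (hw : #{j | w j} ≠ #S) : flagVector S w = 0 := by
  rw [flagVector_apply, Nat.cast_eq_zero, card_eq_zero, filter_eq_empty_iff]
  rintro σ - rfl
  exact hw (by simpa using σ.card_filter_apply_mem S)

theorem flagVector_apply_pos {r : ℕ} (S : Finset (Fin r)) (σ : Equiv.Perm (Fin r)) :
    0 < flagVector S (fun j ↦ decide (σ j ∈ S)) := by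
  rw [flagVector_apply, Nat.cast_pos, card_pos]
  exact ⟨σ, by simp⟩

/-- If for each `n ≤ r` we choose a cell set `S n` of cardinality `n`, the
resulting `r+1` flag vectors are linearly independent. -/
theorem flagVectors_one_graphs_linearIndependent (r : ℕ)
    (S : Fin (r + 1) → Finset (Fin r)) (hS : ∀ n, (S n).card = (n : ℕ)) :
    LinearIndependent ℝ (fun n : Fin (r + 1) => flagVector (S n)) := by
  refine Finsupp.linearIndependent_of_pairwise_apply_eq_zero _ (fun n j ↦ decide (j ∈ S n))
    (fun n m hnm ↦ flagVector_apply_eq_zero _ _ ?_) (fun n ↦ ?_)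
  · simpa [hS] using Fin.val_injective.ne hnm
  · exact (flagVector_apply_pos (S n) 1).ne'
end

section
/- Let n be a natural number, π a permutation of Fin (n+1), and k ∈ Fin (n+1). Let π′ be the unique permutation of Fin n satisfying π ∘ (Fin.succAbove k) = (Fin.succAbove (π k)) ∘ π′, i.e., π′ is the permutation induced by π between the complement of {k} and the complement of {π k} under the order-preserving identifications of these complements with Fin n. Then sign(π) = (−1)^{(k : ℕ) + (π k : ℕ)} · sign(π′). (This sign identity is what makes the orientation induced on an (i−1)-cell, obtained by removing a vertex from an oriented i-cell, well defined up to even permutations.) -/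
/-- If `π'` is the permutation of `Fin n` induced by a permutation `π` of
`Fin (n+1)` between the complement of `{k}` and the complement of `{π k}`
(via the order-preserving embeddings `Fin.succAbove`), then
`sign π = (-1)^(k + π k) * sign π'`. -/
theorem sign_removal_of_vertex (n : ℕ) (π : Equiv.Perm (Fin (n + 1)))
    (k : Fin (n + 1)) (π' : Equiv.Perm (Fin n))
    (h : ∀ j : Fin n, π (Fin.succAbove k j) = Fin.succAbove (π k) (π' j)) :
    Equiv.Perm.sign π =
      (-1 : ℤˣ) ^ ((k : ℕ) + ((π k : Fin (n + 1)) : ℕ)) * Equiv.Perm.sign π' := by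
  set σ : Equiv.Perm (Fin (n + 1)) := (π k).cycleRange * π * k.cycleRange⁻¹ with hσ
  have hσ_eq : σ = Equiv.Perm.decomposeFin.symm (0, π') := by
    apply Equiv.ext
    intro x
    refine Fin.cases ?_ (fun j => ?_) x
    · simp only [hσ, Equiv.Perm.mul_apply, Equiv.Perm.inv_def,
        Fin.cycleRange_symm_zero, Fin.cycleRange_self,
        Equiv.Perm.decomposeFin_symm_apply_zero]
    · simp only [hσ, Equiv.Perm.mul_apply, Equiv.Perm.inv_def,
        Fin.cycleRange_symm_succ]
      rw [h j, Fin.cycleRange_succAbove, Equiv.Perm.decomposeFin_symm_apply_succ]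
      simp
  have hsign : Equiv.Perm.sign σ = Equiv.Perm.sign π' := by
    rw [hσ_eq, Equiv.Perm.decomposeFin.symm_sign]
    simp
  have key : Equiv.Perm.sign π' =
      (-1 : ℤˣ) ^ (((π k : Fin (n + 1)) : ℕ)) * Equiv.Perm.sign π *
        (-1 : ℤˣ) ^ ((k : ℕ)) := by
    rw [← hsign]
    simp [hσ, Fin.sign_cycleRange]
  rcases Int.units_eq_one_or ((-1 : ℤˣ) ^ ((k : ℕ))) with ha | ha <;>
    rcases Int.units_eq_one_or ((-1 : ℤˣ) ^ (((π k : Fin (n + 1)) : ℕ))) with hb | hb <;>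
    rw [pow_add] <;> rw [ha, hb] at key ⊢ <;>
    simp_all [mul_comm]
end
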